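/- arXiv:2202.11267 — 2 statements merged into one kernel-verified Lean document; each statement's English description precedes it below -/
import Mathlib

section
/- Let G be a vertex-minimal graph with no odd 4-coloring, mad(G) < 22/9, and no induced 5-cycle. Then G has no vertex of degree 3 all of whose neighbors have degree 2. -/
/-- A proper `c`-coloring in which every vertex with a neighbor has some color
appearing an odd number of times on its neighborhood. -/
def IsOddColoring {V : Type*} {c : ℕ} (G : SimpleGraph V) (φ : V → Fin c) : Prop :=
  (∀ ⦃u v⦄, G.Adj u v → φ u ≠ φ v) ∧
  ∀ v : V, (G.neighborSet v).Nonempty →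
    ∃ k : Fin c, Odd {u | G.Adj v u ∧ φ u = k}.ncard

/-- `G` has an odd `c`-coloring. -/
def HasOddColoring {V : Type*} (G : SimpleGraph V) (c : ℕ) : Prop :=
  ∃ φ : V → Fin c, IsOddColoring G φ

/-- `mad(G) ≤ r`: every non-empty subgraph has average degree at most `r`. -/
def MadLE {V : Type*} (G : SimpleGraph V) (r : ℚ) : Prop :=
  ∀ H : G.Subgraph, H.verts.Nonempty →
    (2 * H.edgeSet.ncard : ℚ) ≤ r * H.verts.ncard

/-- `mad(G) < r`: every non-empty subgraph has average degree less than `r`. -/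
def MadLT {V : Type*} (G : SimpleGraph V) (r : ℚ) : Prop :=
  ∀ H : G.Subgraph, H.verts.Nonempty →
    (2 * H.edgeSet.ncard : ℚ) < r * H.verts.ncard

/-- `G` has no induced 5-cycle. -/
def NoInducedC5 {V : Type*} (G : SimpleGraph V) : Prop :=
  ¬ ∃ f : Fin 5 → V, Function.Injective f ∧
      ∀ a b, G.Adj (f a) (f b) ↔ (SimpleGraph.cycleGraph 5).Adj a b

/-- `G` is a vertex-minimal counterexample: `G` has no odd 4-coloring, satisfies
`mad(G) < 22/9` and has no induced 5-cycle, while every graph on fewer vertices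
satisfying the same sparsity hypotheses has an odd 4-coloring. -/
def MinimalCounterexample {V : Type} [Fintype V] (G : SimpleGraph V) : Prop :=
  ¬ HasOddColoring G 4 ∧ MadLT G (22 / 9) ∧ NoInducedC5 G ∧
    ∀ (W : Type) [Fintype W] (H : SimpleGraph W), Fintype.card W < Fintype.card V →
      MadLT H (22 / 9) → NoInducedC5 H → HasOddColoring H 4


lemma edgeSet_map_eq {V W : Type*} {G : SimpleGraph V} {G' : SimpleGraph W}
    (f : G →g G') (K : G.Subgraph) :
    (K.map f).edgeSet = Sym2.map f '' K.edgeSet := by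
  ext e
  induction e with
  | _ x y =>
    simp only [SimpleGraph.Subgraph.mem_edgeSet, SimpleGraph.Subgraph.map_adj, Relation.Map]
    constructor
    · rintro ⟨a, b, hab, rfl, rfl⟩
      exact ⟨s(a, b), SimpleGraph.Subgraph.mem_edgeSet.2 hab, rfl⟩
    · rintro ⟨e', he', hme⟩
      induction e' with
      | _ a b =>
        rw [Sym2.map_pair_eq, Sym2.eq_iff] at hme
        rcases hme with ⟨rfl, rfl⟩ | ⟨rfl, rfl⟩
        · exact ⟨a, b, SimpleGraph.Subgraph.mem_edgeSet.1 he', rfl, rfl⟩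
        · exact ⟨b, a, (SimpleGraph.Subgraph.mem_edgeSet.1 he').symm, rfl, rfl⟩

lemma madLT_induce {V : Type*} {G : SimpleGraph V} {r : ℚ} (h : MadLT G r) (s : Set V) :
    MadLT (G.induce s) r := by
  intro K hK
  have hinj : Function.Injective ⇑(SimpleGraph.Embedding.induce (G := G) s).toHom :=
    (SimpleGraph.Embedding.induce (G := G) s).injective
  have h2 := h (K.map (SimpleGraph.Embedding.induce s).toHom)
    (by rw [SimpleGraph.Subgraph.map_verts]; exact hK.image _)
  rw [edgeSet_map_eq, SimpleGraph.Subgraph.map_verts,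
    Set.ncard_image_of_injective _ hinj,
    Set.ncard_image_of_injective _ (Sym2.map.injective hinj)] at h2
  exact h2

lemma noInducedC5_induce {V : Type*} {G : SimpleGraph V} (h : NoInducedC5 G) (s : Set V) :
    NoInducedC5 (G.induce s) := by
  rintro ⟨f, hf, hadj⟩
  exact h ⟨fun i => (f i : V), Subtype.val_injective.comp hf, fun a b => hadj a b⟩

lemma exists_odd_fiber_of_odd (a : Fin 3 → Fin 4) (p : Fin 3 → Prop) [DecidablePred p]
    (hodd : Odd ((Finset.univ.filter p).card)) :
    ∃ k, Odd ({i | p i ∧ a i = k}.ncard) := by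
  have h : ∀ (a : Fin 3 → Fin 4) (T : Finset (Fin 3)), Odd T.card →
      ∃ k, Odd ((T.filter (fun i => a i = k)).card) := by decide
  obtain ⟨k, hk⟩ := h a (Finset.univ.filter p) hodd
  refine ⟨k, ?_⟩
  rw [Set.ncard_eq_toFinset_card', Set.toFinset_setOf]
  rwa [Finset.filter_filter] at hk

lemma fin3_third : ∀ i j : Fin 3, i ≠ j → ∃ l, l ≠ i ∧ l ≠ j ∧ ∀ t, t = i ∨ t = j ∨ t = l := by
  decide

lemma pick_ne3 : ∀ x y z : Fin 4, ∃ b, b ≠ x ∧ b ≠ y ∧ b ≠ z := by decide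

lemma pick_two : ∀ x y : Fin 4, ∃ b₁ b₂, b₁ ≠ b₂ ∧ b₁ ≠ x ∧ b₁ ≠ y ∧ b₂ ≠ x ∧ b₂ ≠ y := by
  decide

lemma fin3_odd_card : ∀ T : Finset (Fin 3), T.Nonempty → T.card ≠ 2 → Odd T.card := by decide

lemma exists_odd_fiber (a : Fin 3 → Fin 4) : ∃ k, Odd ({i | a i = k}.ncard) := by
  have h : ∀ a : Fin 3 → Fin 4, ∃ k, Odd ((Finset.univ.filter (fun i => a i = k)).card) := by
    decide
  obtain ⟨k, hk⟩ := h a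
  refine ⟨k, ?_⟩
  rwa [Set.ncard_eq_toFinset_card', Set.toFinset_setOf]

lemma extension_lemma {V : Type} [Fintype V] (G : SimpleGraph V) (v : V)
    (u : Fin 3 → V) (w : Fin 3 → V)
    (huinj : Function.Injective u)
    (hNv : G.neighborSet v = Set.range u)
    (hw : ∀ i, w i ≠ v ∧ G.neighborSet (u i) = {v, w i})
    (φ : ((insert v (Set.range u) : Set V)ᶜ : Set V) → Fin 4)
    (hφ : IsOddColoring (G.induce (insert v (Set.range u) : Set V)ᶜ) φ)
    (c : Fin 4) (a : Fin 3 → Fin 4)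
    (hc : ∀ i, a i ≠ c)
    (hadj : ∀ i j, G.Adj (u i) (u j) → a i ≠ a j)
    (hext : ∀ i (hwi : w i ∈ (insert v (Set.range u) : Set V)ᶜ),
      a i ≠ φ ⟨w i, hwi⟩ ∧ c ≠ φ ⟨w i, hwi⟩)
    (hodd1 : ∀ x (hx : x ∈ (insert v (Set.range u) : Set V)ᶜ),
      ((G.induce (insert v (Set.range u) : Set V)ᶜ).neighborSet ⟨x, hx⟩).Nonempty →
      ∃ k, Odd {y | (G.induce (insert v (Set.range u) : Set V)ᶜ).Adj ⟨x, hx⟩ y ∧ φ y = k}.ncard ∧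
        ∀ i, G.Adj x (u i) → a i ≠ k)
    (hodd2 : ∀ x (hx : x ∈ (insert v (Set.range u) : Set V)ᶜ),
      ¬ ((G.induce (insert v (Set.range u) : Set V)ᶜ).neighborSet ⟨x, hx⟩).Nonempty →
      (∃ i, G.Adj x (u i)) → ∃ k, Odd {i | G.Adj x (u i) ∧ a i = k}.ncard) :
    HasOddColoring G 4 := by
  classical
  let S : Set V := insert v (Set.range u)
  -- basic facts
  have hvS : v ∈ S := Set.mem_insert _ _
  have huS : ∀ i, u i ∈ S := fun i => Set.mem_insert_of_mem _ ⟨i, rfl⟩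
  have hvu : ∀ i, u i ≠ v := by
    intro i h
    have : u i ∈ G.neighborSet v := by rw [hNv]; exact ⟨i, rfl⟩
    rw [h] at this
    exact G.irrefl this
  have hmemS : ∀ x, x ∈ S ↔ x = v ∨ ∃ i, x = u i := by
    intro x
    show x ∈ insert v (Set.range u) ↔ _
    simp only [Set.mem_insert_iff, Set.mem_range]
    constructor
    · rintro (h | ⟨i, rfl⟩)
      · exact Or.inl h
      · exact Or.inr ⟨i, rfl⟩
    · rintro (h | ⟨i, rfl⟩)
      · exact Or.inl h
      · exact Or.inr ⟨i, rfl⟩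
  have hvAdj : ∀ y, G.Adj v y ↔ ∃ i, y = u i := by
    intro y
    rw [← SimpleGraph.mem_neighborSet, hNv]
    constructor
    · rintro ⟨i, rfl⟩; exact ⟨i, rfl⟩
    · rintro ⟨i, rfl⟩; exact ⟨i, rfl⟩
  have huAdj : ∀ i y, G.Adj (u i) y ↔ (y = v ∨ y = w i) := by
    intro i y
    rw [← SimpleGraph.mem_neighborSet, (hw i).2]
    simp [Set.mem_insert_iff]
  -- the extended coloring
  set ψ : V → Fin 4 := fun x =>
    if hx : x ∈ S then
      (if x = v then c else if x = u 0 then a 0 else if x = u 1 then a 1 else a 2)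
    else φ ⟨x, hx⟩ with hψ
  have hψv : ψ v = c := by simp [hψ, hvS]
  have hd10 : u 1 ≠ u 0 := fun h => absurd (huinj h) (by decide)
  have hd20 : u 2 ≠ u 0 := fun h => absurd (huinj h) (by decide)
  have hd21 : u 2 ≠ u 1 := fun h => absurd (huinj h) (by decide)
  have e0 : ψ (u 0) = a 0 := by
    show (if hx : u 0 ∈ S then _ else _) = a 0
    rw [dif_pos (huS 0)]; simp [hvu 0]
  have e1 : ψ (u 1) = a 1 := by
    show (if hx : u 1 ∈ S then _ else _) = a 1
    rw [dif_pos (huS 1)]; simp [hvu 1, hd10]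
  have e2 : ψ (u 2) = a 2 := by
    show (if hx : u 2 ∈ S then _ else _) = a 2
    rw [dif_pos (huS 2)]; simp [hvu 2, hd20, hd21]
  have hψu : ∀ i, ψ (u i) = a i := by
    intro i
    fin_cases i
    · exact e0
    · exact e1
    · exact e2
  have hψo : ∀ x (hx : x ∈ Sᶜ), ψ x = φ ⟨x, hx⟩ := by
    intro x hx
    simp only [hψ]
    rw [dif_neg hx]
  refine ⟨ψ, ?_, ?_⟩
  · -- properness
    have key : ∀ x y, G.Adj x y → x ∈ S → ψ x ≠ ψ y := by
      intro x y hxy hxS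
      rcases (hmemS x).1 hxS with rfl | ⟨i, rfl⟩
      · obtain ⟨i, rfl⟩ := (hvAdj y).1 hxy
        rw [hψv, hψu]
        exact fun h => hc i h.symm
      · rcases (huAdj i y).1 hxy with rfl | rfl
        · rw [hψu, hψv]; exact hc i
        · by_cases hwi : w i ∈ S
          · rcases (hmemS _).1 hwi with h | ⟨j, h⟩
            · exact absurd h (hw i).1
            · rw [hψu, h, hψu]
              exact hadj i j (by rw [← h]; exact hxy)
          · rw [hψu, hψo _ hwi]
            exact (hext i hwi).1
    intro x y hxy
    by_cases hxS : x ∈ S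
    · exact key x y hxy hxS
    · by_cases hyS : y ∈ S
      · exact (key y x hxy.symm hyS).symm
      · rw [hψo _ hxS, hψo _ hyS]
        exact hφ.1 (show (G.induce Sᶜ).Adj ⟨x, hxS⟩ ⟨y, hyS⟩ from hxy)
  · -- odd condition
    intro x hne
    by_cases hxS : x ∈ S
    · rcases (hmemS x).1 hxS with rfl | ⟨i, rfl⟩
      · obtain ⟨k, hk⟩ := exists_odd_fiber a
        refine ⟨k, ?_⟩
        have hset : {y | G.Adj x y ∧ ψ y = k} = u '' {i | a i = k} := by
          ext y
          simp only [Set.mem_setOf_eq, Set.mem_image]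
          constructor
          · rintro ⟨hvy, hyk⟩
            obtain ⟨i, rfl⟩ := (hvAdj y).1 hvy
            exact ⟨i, by rwa [hψu] at hyk, rfl⟩
          · rintro ⟨i, hik, rfl⟩
            exact ⟨(hvAdj _).2 ⟨i, rfl⟩, by rwa [hψu]⟩
        rw [hset, Set.ncard_image_of_injective _ huinj]
        exact hk
      · refine ⟨c, ?_⟩
        have hset : {y | G.Adj (u i) y ∧ ψ y = c} = {v} := by
          ext y
          simp only [Set.mem_setOf_eq, Set.mem_singleton_iff]
          constructor
          · rintro ⟨hadjy, hyc⟩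
            rcases (huAdj i y).1 hadjy with rfl | rfl
            · rfl
            · exfalso
              by_cases hwi : w i ∈ S
              · rcases (hmemS _).1 hwi with h | ⟨j, h⟩
                · exact (hw i).1 h
                · rw [h, hψu] at hyc; exact hc j hyc
              · rw [hψo _ hwi] at hyc
                exact (hext i hwi).2 hyc.symm
          · rintro rfl
            exact ⟨(huAdj i _).2 (Or.inl rfl), hψv⟩
        rw [hset, Set.ncard_singleton]
        exact odd_one
    · have hyv : ¬ G.Adj x v := by
        intro h
        obtain ⟨i, hi⟩ := (hvAdj x).1 h.symm
        rw [hi] at hxS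
        exact hxS (huS i)
      by_cases hH : ((G.induce Sᶜ).neighborSet ⟨x, hxS⟩).Nonempty
      · obtain ⟨k, hk, havoid⟩ := hodd1 x hxS hH
        refine ⟨k, ?_⟩
        have hset : {y | G.Adj x y ∧ ψ y = k}
            = Subtype.val '' {y | (G.induce Sᶜ).Adj ⟨x, hxS⟩ y ∧ φ y = k} := by
          ext y
          simp only [Set.mem_setOf_eq, Set.mem_image]
          constructor
          · rintro ⟨hxy, hyk⟩
            by_cases hyS : y ∈ S
            · exfalso
              rcases (hmemS y).1 hyS with rfl | ⟨j, rfl⟩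
              · exact hyv hxy
              · rw [hψu] at hyk
                exact havoid j hxy hyk
            · exact ⟨⟨y, hyS⟩, ⟨hxy, by rw [← hψo _ hyS]; exact hyk⟩, rfl⟩
          · rintro ⟨⟨y, hyS⟩, ⟨hady, hyk⟩, rfl⟩
            exact ⟨hady, by rw [hψo _ hyS]; exact hyk⟩
        rw [hset, Set.ncard_image_of_injective _ Subtype.val_injective]
        exact hk
      · have hexu : ∃ i, G.Adj x (u i) := by
          obtain ⟨y, hy⟩ := hne
          have hxy : G.Adj x y := hy
          by_cases hyS : y ∈ S
          · rcases (hmemS y).1 hyS with rfl | ⟨j, rfl⟩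
            · exact absurd hxy hyv
            · exact ⟨j, hxy⟩
          · exact absurd ⟨⟨y, hyS⟩, (show (G.induce Sᶜ).Adj ⟨x, hxS⟩ ⟨y, hyS⟩ from hxy)⟩ hH
        obtain ⟨k, hk⟩ := hodd2 x hxS hH hexu
        refine ⟨k, ?_⟩
        have hset : {y | G.Adj x y ∧ ψ y = k} = u '' {i | G.Adj x (u i) ∧ a i = k} := by
          ext y
          simp only [Set.mem_setOf_eq, Set.mem_image]
          constructor
          · rintro ⟨hxy, hyk⟩
            by_cases hyS : y ∈ S
            · rcases (hmemS y).1 hyS with rfl | ⟨j, rfl⟩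
              · exact absurd hxy hyv
              · exact ⟨j, ⟨hxy, by rwa [hψu] at hyk⟩, rfl⟩
            · exact absurd ⟨⟨y, hyS⟩, (show (G.induce Sᶜ).Adj ⟨x, hxS⟩ ⟨y, hyS⟩ from hxy)⟩ hH
          · rintro ⟨i, ⟨hadji, hik⟩, rfl⟩
            exact ⟨hadji, by rwa [hψu]⟩
        rw [hset, Set.ncard_image_of_injective _ huinj]
        exact hk


/-- A vertex-minimal counterexample has no vertex of degree 3 all of whose neighbors
have degree 2. -/
theorem stmt_18 {V : Type} [Fintype V] (G : SimpleGraph V)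
    (hG : MinimalCounterexample G) :
    ¬ ∃ v : V, (G.neighborSet v).ncard = 3 ∧
        ∀ u ∈ G.neighborSet v, (G.neighborSet u).ncard = 2 := by
  classical
  rintro ⟨v, h3, h2⟩
  obtain ⟨hnc, hmad, hc5, hmin⟩ := hG
  obtain ⟨u1, u2, u3, h12, h13, h23, hNset⟩ := Set.ncard_eq_three.1 h3
  set u : Fin 3 → V := ![u1, u2, u3] with hu
  have huinj : Function.Injective u := by
    intro i j hij
    fin_cases i <;> fin_cases j <;>
      simp only [hu, Matrix.cons_val_zero, Matrix.cons_val_one, Matrix.head_cons,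
        Matrix.cons_val_two, Matrix.tail_cons] at hij ⊢ <;>
      first
        | rfl
        | exact absurd hij h12 | exact absurd hij h13 | exact absurd hij h23
        | exact absurd hij.symm h12 | exact absurd hij.symm h13 | exact absurd hij.symm h23
  have hrange : Set.range u = {u1, u2, u3} := by
    ext x
    simp only [Set.mem_range, Set.mem_insert_iff, Set.mem_singleton_iff]
    constructor
    · rintro ⟨i, rfl⟩
      fin_cases i <;> simp [hu]
    · rintro (rfl | rfl | rfl)
      exacts [⟨0, rfl⟩, ⟨1, rfl⟩, ⟨2, rfl⟩]
  have hNv : G.neighborSet v = Set.range u := by rw [hNset, ← hrange]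
  have hadjv : ∀ t, G.Adj v (u t) := by
    intro t
    have : u t ∈ G.neighborSet v := by rw [hNv]; exact ⟨t, rfl⟩
    exact this
  have hvu : ∀ t, u t ≠ v := by
    intro t h
    have := hadjv t
    rw [h] at this
    exact G.irrefl this
  have hdeg2 : ∀ t, (G.neighborSet (u t)).ncard = 2 := by
    intro t
    exact h2 (u t) (by rw [hNv]; exact ⟨t, rfl⟩)
  have hwex : ∀ t, ∃ z, z ≠ v ∧ G.neighborSet (u t) = {v, z} := by
    intro t
    obtain ⟨x, y, hxy, hN⟩ := Set.ncard_eq_two.1 (hdeg2 t)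
    have hv : v ∈ G.neighborSet (u t) := (hadjv t).symm
    rw [hN] at hv
    rcases hv with hv | hv
    · refine ⟨y, ?_, ?_⟩
      · intro h
        exact hxy ((hv.symm).trans h.symm)
      · rw [hN, hv]
    · refine ⟨x, ?_, ?_⟩
      · intro h
        exact hxy (h.trans hv)
      · rw [hN, hv, Set.pair_comm]
  choose w hw using hwex
  set S : Set V := insert v (Set.range u) with hS
  have hvS : v ∈ S := Set.mem_insert _ _
  have huS : ∀ t, u t ∈ S := fun t => Set.mem_insert_of_mem _ ⟨t, rfl⟩
  have hmemS : ∀ x, x ∈ S ↔ x = v ∨ ∃ t, x = u t := by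
    intro x
    simp only [hS, Set.mem_insert_iff, Set.mem_range]
    constructor
    · rintro (h | ⟨t, rfl⟩)
      · exact Or.inl h
      · exact Or.inr ⟨t, rfl⟩
    · rintro (h | ⟨t, rfl⟩)
      · exact Or.inl h
      · exact Or.inr ⟨t, rfl⟩
  have hadjwu : ∀ t, G.Adj (w t) (u t) := by
    intro t
    have : w t ∈ G.neighborSet (u t) := by
      rw [(hw t).2]; exact Set.mem_insert_of_mem _ rfl
    exact this.symm
  have hadjux : ∀ t x, G.Adj x (u t) → x = v ∨ x = w t := by
    intro t x hx
    have : x ∈ G.neighborSet (u t) := hx.symm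
    rw [(hw t).2] at this
    exact this
  -- the smaller graph
  have hcard : Fintype.card ↥(Sᶜ) < Fintype.card V := by
    have : ¬ v ∈ Sᶜ := fun h => h hvS
    exact Fintype.card_subtype_lt (x := v) this
  obtain ⟨φ, hφ⟩ := hmin ↥(Sᶜ) (G.induce (Sᶜ)) hcard (madLT_induce hmad _)
    (noInducedC5_induce hc5 _)
  -- choose odd colors for vertices of the small graph
  have hKex : ∀ x : ↥(Sᶜ), ∃ k : Fin 4,
      ((G.induce (Sᶜ)).neighborSet x).Nonempty →
        Odd {y | (G.induce (Sᶜ)).Adj x y ∧ φ y = k}.ncard := by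
    intro x
    by_cases h : ((G.induce (Sᶜ)).neighborSet x).Nonempty
    · obtain ⟨k, hk⟩ := hφ.2 x h
      exact ⟨k, fun _ => hk⟩
    · exact ⟨φ x, fun h' => absurd h' h⟩
  choose Kc hKc using hKex
  apply hnc
  by_cases hA : ∃ i j, i ≠ j ∧ G.Adj (u i) (u j)
  · obtain ⟨i, j, hij, hAdjij⟩ := hA
    obtain ⟨l, hli, hlj, hlcases⟩ := fin3_third i j hij
    have hwij : w i = u j := by
      rcases hadjux i (u j) hAdjij.symm with h | h
      · exact absurd h (hvu j)
      · exact h.symm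
    have hwji : w j = u i := by
      rcases hadjux j (u i) hAdjij with h | h
      · exact absurd h (hvu i)
      · exact h.symm
    have hwlS : w l ∉ S := by
      intro hmem
      rcases (hmemS _).1 hmem with h | ⟨t, h⟩
      · exact (hw l).1 h
      · have hadlt : G.Adj (u t) (u l) := h ▸ hadjwu l
        rcases hlcases t with h' | h' | h'
        · subst h'
          rcases hadjux t (u l) hadlt.symm with h'' | h'' 
          · exact absurd h'' (hvu l)
          · rw [hwij] at h''
            exact hlj (huinj h'')
        · subst h'
          rcases hadjux t (u l) hadlt.symm with h'' | h''
          · exact absurd h'' (hvu l)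
          · rw [hwji] at h''
            exact hli (huinj h'')
        · subst h'
          exact G.irrefl hadlt
    obtain ⟨c, hcw, -, -⟩ := pick_ne3 (φ ⟨w l, hwlS⟩) (φ ⟨w l, hwlS⟩) (φ ⟨w l, hwlS⟩)
    obtain ⟨al, hal1, hal2, hal3⟩ := pick_ne3 c (φ ⟨w l, hwlS⟩) (Kc ⟨w l, hwlS⟩)
    obtain ⟨b1, b2, hb12, hb1c, -, hb2c, -⟩ := pick_two c c
    set a : Fin 3 → Fin 4 := fun t => if t = i then b1 else if t = j then b2 else al with ha
    have hai : a i = b1 := by simp [ha]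
    have haj : a j = b2 := by simp [ha, hij.symm]
    have halv : a l = al := by simp [ha, hli, hlj]
    refine extension_lemma G v u w huinj hNv hw φ hφ c a ?_ ?_ ?_ ?_ ?_
    · intro t
      rcases hlcases t with h | h | h <;> subst h
      · rw [hai]; exact hb1c
      · rw [haj]; exact hb2c
      · rw [halv]; exact hal1
    · intro s t hst
      rcases hadjux t (u s) hst with h | h
      · exact absurd h (hvu s)
      · rcases hlcases t with h' | h' | h'
        · rw [h', hwij] at h
          have hs : s = j := huinj h
          rw [hs, h', haj, hai]
          exact hb12.symm
        · rw [h', hwji] at h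
          have hs : s = i := huinj h
          rw [hs, h', hai, haj]
          exact hb12
        · rw [h'] at h
          exact absurd (show w l ∈ S by rw [← h]; exact huS s) hwlS
    · intro t hwt
      rcases hlcases t with h | h | h <;> subst h
      · exact absurd (hwij ▸ huS j) hwt
      · exact absurd (hwji ▸ huS i) hwt
      · exact ⟨halv ▸ hal2, hcw⟩
    · intro x hx hne
      refine ⟨Kc ⟨x, hx⟩, hKc _ hne, ?_⟩
      intro t hadjxu
      rcases hadjux t x hadjxu with h | hxw
      · exact (hx (show x ∈ S by rw [h]; exact hvS)).elim
      · rcases hlcases t with h | h | h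
        · rw [h, hwij] at hxw
          exact (hx (show x ∈ S by rw [hxw]; exact huS j)).elim
        · rw [h, hwji] at hxw
          exact (hx (show x ∈ S by rw [hxw]; exact huS i)).elim
        · rw [h] at hxw ⊢
          have hxeq : (⟨x, hx⟩ : ↥(Sᶜ)) = ⟨w l, hwlS⟩ := Subtype.ext hxw
          rw [halv, hxeq]
          exact hal3
    · rintro x hx hiso ⟨t0, ht0⟩
      have hxwl : x = w l := by
        rcases hadjux t0 x ht0 with h | hxw
        · exact absurd (show x ∈ S by rw [h]; exact hvS) hx
        · rcases hlcases t0 with h | h | h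
          · rw [h, hwij] at hxw
            exact absurd (show x ∈ S by rw [hxw]; exact huS j) hx
          · rw [h, hwji] at hxw
            exact absurd (show x ∈ S by rw [hxw]; exact huS i) hx
          · rw [h] at hxw
            exact hxw
      refine ⟨al, ?_⟩
      have hset : {t | G.Adj x (u t) ∧ a t = al} = {l} := by
        ext t
        simp only [Set.mem_setOf_eq, Set.mem_singleton_iff]
        constructor
        · rintro ⟨hadjt, -⟩
          rcases hadjux t x hadjt with h | hxw
          · exact absurd (show x ∈ S by rw [h]; exact hvS) hx
          · rcases hlcases t with h | h | h
            · rw [h, hwij] at hxw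
              exact absurd (show x ∈ S by rw [hxw]; exact huS j) hx
            · rw [h, hwji] at hxw
              exact absurd (show x ∈ S by rw [hxw]; exact huS i) hx
            · exact h
        · intro ht
          rw [ht]
          exact ⟨show G.Adj x (u l) by rw [hxwl]; exact hadjwu l, halv⟩
      rw [hset, Set.ncard_singleton]
      exact odd_one
  · have hnadj : ∀ s t, ¬ G.Adj (u s) (u t) := by
      intro s t h
      by_cases hst : s = t
      · rw [hst] at h; exact G.irrefl h
      · exact hA ⟨s, t, hst, h⟩
    have hwS : ∀ t, w t ∉ S := by
      intro t hmem
      rcases (hmemS _).1 hmem with h | ⟨s, h⟩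
      · exact (hw t).1 h
      · exact hnadj t s (by rw [← h]; exact (hadjwu t).symm)
    obtain ⟨c, hc0, hc1, hc2⟩ := pick_ne3 (φ ⟨w 0, hwS 0⟩) (φ ⟨w 1, hwS 1⟩) (φ ⟨w 2, hwS 2⟩)
    have hcw : ∀ t, c ≠ φ ⟨w t, hwS t⟩ := by
      intro t
      fin_cases t
      · exact hc0
      · exact hc1
      · exact hc2
    have ha0ex : ∀ t, ∃ b, b ≠ c ∧ b ≠ φ ⟨w t, hwS t⟩ ∧ b ≠ Kc ⟨w t, hwS t⟩ :=
      fun t => pick_ne3 _ _ _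
    choose a0 ha0c ha0w ha0K using ha0ex
    by_cases hbp : ∃ i j, i ≠ j ∧ w i = w j ∧
        ¬ ((G.induce (Sᶜ)).neighborSet ⟨w i, hwS i⟩).Nonempty ∧
        ∀ l, l ≠ i → l ≠ j → w l ≠ w i
    · obtain ⟨i, j, hij, hwij, hiso, hthird⟩ := hbp
      obtain ⟨l, hli, hlj, hlcases⟩ := fin3_third i j hij
      obtain ⟨b1, b2, hb12, hb1c, hb1w, hb2c, hb2w⟩ := pick_two c (φ ⟨w i, hwS i⟩)
      set a : Fin 3 → Fin 4 := fun t => if t = i then b1 else if t = j then b2 else a0 t with ha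
      have hai : a i = b1 := by simp [ha]
      have haj : a j = b2 := by simp [ha, hij.symm]
      have hal : a l = a0 l := by simp [ha, hli, hlj]
      refine extension_lemma G v u w huinj hNv hw φ hφ c a ?_ ?_ ?_ ?_ ?_
      · intro t
        rcases hlcases t with h | h | h <;> rw [h]
        · rw [hai]; exact hb1c
        · rw [haj]; exact hb2c
        · rw [hal]; exact ha0c l
      · intro s t hst
        exact absurd hst (hnadj s t)
      · intro t hwt
        have hphi : φ ⟨w t, hwt⟩ = φ ⟨w t, hwS t⟩ := rfl
        refine ⟨?_, hcw t⟩
        rw [hphi]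
        rcases hlcases t with h | h | h <;> rw [h]
        · rw [hai]; exact hb1w
        · rw [haj]
          have heq : (⟨w j, hwS j⟩ : ↥(Sᶜ)) = ⟨w i, hwS i⟩ := Subtype.ext hwij.symm
          rw [heq]
          exact hb2w
        · rw [hal]; exact ha0w l
      · intro x hx hne
        refine ⟨Kc ⟨x, hx⟩, hKc _ hne, ?_⟩
        intro t hadjxu
        rcases hadjux t x hadjxu with h | hxw
        · exact (hx (show x ∈ S by rw [h]; exact hvS)).elim
        · rcases hlcases t with h | h | h
          · exfalso
            apply hiso
            have hxwi : x = w i := by rw [hxw, h]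
            have heq : (⟨x, hx⟩ : ↥(Sᶜ)) = ⟨w i, hwS i⟩ := Subtype.ext hxwi
            rw [← heq]
            exact hne
          · exfalso
            apply hiso
            have hxwi : x = w i := by rw [hxw, h, ← hwij]
            have heq : (⟨x, hx⟩ : ↥(Sᶜ)) = ⟨w i, hwS i⟩ := Subtype.ext hxwi
            rw [← heq]
            exact hne
          · have hxwl : x = w l := by rw [hxw, h]
            have heq : (⟨x, hx⟩ : ↥(Sᶜ)) = ⟨w l, hwS l⟩ := Subtype.ext hxwl
            rw [h, hal, heq]
            exact ha0K l
      · rintro x hx hiso' ⟨t0, ht0⟩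
        by_cases hxwi : x = w i
        · refine ⟨b1, ?_⟩
          have hset : {t | G.Adj x (u t) ∧ a t = b1} = {i} := by
            ext t
            simp only [Set.mem_setOf_eq, Set.mem_singleton_iff]
            constructor
            · rintro ⟨hadjt, hat⟩
              rcases hadjux t x hadjt with h | hxw
              · exact (hx (show x ∈ S by rw [h]; exact hvS)).elim
              · rcases hlcases t with h | h | h
                · exact h
                · exfalso
                  rw [h, haj] at hat
                  exact hb12 hat.symm
                · exfalso
                  apply hthird l hli hlj
                  rw [h] at hxw
                  rw [← hxw]
                  exact hxwi
            · intro ht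
              rw [ht]
              exact ⟨show G.Adj x (u i) by rw [hxwi]; exact hadjwu i, hai⟩
          rw [hset, Set.ncard_singleton]
          exact odd_one
        · refine ⟨a0 l, ?_⟩
          have hxwl : x = w l := by
            rcases hadjux t0 x ht0 with h | hxw
            · exact (hx (show x ∈ S by rw [h]; exact hvS)).elim
            · rcases hlcases t0 with h | h | h
              · exact (hxwi (by rw [hxw, h])).elim
              · exact (hxwi (by rw [hxw, h, ← hwij])).elim
              · rw [hxw, h]
          have hset : {t | G.Adj x (u t) ∧ a t = a0 l} = {l} := by
            ext t
            simp only [Set.mem_setOf_eq, Set.mem_singleton_iff]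
            constructor
            · rintro ⟨hadjt, -⟩
              rcases hadjux t x hadjt with h | hxw
              · exact (hx (show x ∈ S by rw [h]; exact hvS)).elim
              · rcases hlcases t with h | h | h
                · exact (hxwi (by rw [hxw, h])).elim
                · exact (hxwi (by rw [hxw, h, ← hwij])).elim
                · exact h
            · intro ht
              rw [ht]
              exact ⟨show G.Adj x (u l) by rw [hxwl]; exact hadjwu l, hal⟩
          rw [hset, Set.ncard_singleton]
          exact odd_one
    · refine extension_lemma G v u w huinj hNv hw φ hφ c a0 ?_ ?_ ?_ ?_ ?_
      · exact ha0c
      · intro s t hst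
        exact absurd hst (hnadj s t)
      · intro t hwt
        exact ⟨ha0w t, hcw t⟩
      · intro x hx hne
        refine ⟨Kc ⟨x, hx⟩, hKc _ hne, ?_⟩
        intro t hadjxu
        rcases hadjux t x hadjxu with h | hxw
        · exact (hx (show x ∈ S by rw [h]; exact hvS)).elim
        · have heq : (⟨x, hx⟩ : ↥(Sᶜ)) = ⟨w t, hwS t⟩ := Subtype.ext hxw
          rw [heq]
          exact ha0K t
      · rintro x hx hiso' ⟨t0, ht0⟩
        have hwx : ∀ t, G.Adj x (u t) ↔ w t = x := by
          intro t
          constructor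
          · intro h
            rcases hadjux t x h with h' | h'
            · exact (hx (show x ∈ S by rw [h']; exact hvS)).elim
            · exact h'.symm
          · intro h
            rw [← h]
            exact hadjwu t
        set T : Finset (Fin 3) := Finset.univ.filter (fun t => G.Adj x (u t)) with hT
        have hTne : T.Nonempty := ⟨t0, by simp only [hT, Finset.mem_filter, Finset.mem_univ, true_and]; exact ht0⟩
        have hT2 : T.card ≠ 2 := by
          intro h2c
          obtain ⟨s, t, hst, hTeq⟩ := Finset.card_eq_two.1 h2c
          have hsmem : s ∈ T := by rw [hTeq]; exact Finset.mem_insert_self _ _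
          have htmem : t ∈ T := by rw [hTeq]; simp
          have hads : G.Adj x (u s) := by
            simpa only [hT, Finset.mem_filter, Finset.mem_univ, true_and] using hsmem
          have hadt : G.Adj x (u t) := by
            simpa only [hT, Finset.mem_filter, Finset.mem_univ, true_and] using htmem
          have hws : w s = x := (hwx s).1 hads
          have hwt : w t = x := (hwx t).1 hadt
          apply hbp
          refine ⟨s, t, hst, by rw [hws, hwt], ?_, ?_⟩
          · have heq : (⟨w s, hwS s⟩ : ↥(Sᶜ)) = ⟨x, hx⟩ := Subtype.ext hws
            rw [heq]
            exact hiso'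
          · intro l' hl's hl't hwl'
            have hmem : l' ∈ T := by
              simp only [hT, Finset.mem_filter, Finset.mem_univ, true_and]
              exact (hwx l').2 (by rw [hwl', hws])
            rw [hTeq] at hmem
            rcases Finset.mem_insert.1 hmem with h | h
            · exact hl's h
            · exact hl't (Finset.mem_singleton.1 h)
        have hToddc := fin3_odd_card T hTne hT2
        rw [hT] at hToddc
        exact exists_odd_fiber_of_odd a0 (fun t => G.Adj x (u t)) hToddc
end

section
/- Let G_0 be a c-regular graph with a proper c-coloring (c ≥ 5), and let G be the graph obtained from G_0 by subdividing every edge exactly once. Then G has an odd c-coloring. In particular, by Brooks' theorem, if G_0 is c-regular, connected, and not isomorphic to K_{c+1}, then its 1-subdivision is odd c-colorable. -/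
/-- The 1-subdivision of `G₀`: each edge `uv` is replaced by a path `u - x_{uv} - v`
through a new degree-2 vertex `x_{uv}`. -/
def Subdiv {V : Type*} (G₀ : SimpleGraph V) : SimpleGraph (V ⊕ G₀.edgeSet) :=
  SimpleGraph.fromRel (fun a b =>
    ∃ (v : V) (e : G₀.edgeSet), a = Sum.inl v ∧ b = Sum.inr e ∧ v ∈ e.val)

lemma aux_odd {V : Type*} {c : ℕ} (hc : 5 ≤ c) (φ₀ : V → Fin c) (s : Finset (Sym2 V))
    (hs : ∀ a b, s(a, b) ∈ s → φ₀ a ≠ φ₀ b) :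
    ∃ f : Sym2 V → Fin c,
      (∀ a b, s(a, b) ∈ s → f s(a, b) ≠ φ₀ a) ∧
      (∀ v : V, (∃ e ∈ s, v ∈ e) →
        ∃ k : Fin c, Odd {e : Sym2 V | e ∈ s ∧ v ∈ e ∧ f e = k}.ncard) := by
  classical
  revert hs
  induction s using Finset.induction_on with
  | empty =>
    intro _
    exact ⟨fun _ => ⟨0, by omega⟩, by simp, by simp⟩
  | @insert e s he ih =>
    revert he
    induction e using Sym2.ind with
    | _ a b =>
    intro he hs'
    have hsub : ∀ x y, s(x, y) ∈ s → φ₀ x ≠ φ₀ y :=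
      fun x y h => hs' x y (Finset.mem_insert_of_mem h)
    obtain ⟨f, hf1, hf2⟩ := ih hsub
    have hab : φ₀ a ≠ φ₀ b := hs' a b (Finset.mem_insert_self _ _)
    -- witness colors at a and b
    have hA : ∃ ka : Fin c, (∃ e' ∈ s, a ∈ e') →
        Odd {e' : Sym2 V | e' ∈ s ∧ a ∈ e' ∧ f e' = ka}.ncard := by
      by_cases h : ∃ e' ∈ s, a ∈ e'
      · obtain ⟨k, hk⟩ := hf2 a h; exact ⟨k, fun _ => hk⟩
      · exact ⟨φ₀ a, fun h' => absurd h' h⟩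
    have hB : ∃ kb : Fin c, (∃ e' ∈ s, b ∈ e') →
        Odd {e' : Sym2 V | e' ∈ s ∧ b ∈ e' ∧ f e' = kb}.ncard := by
      by_cases h : ∃ e' ∈ s, b ∈ e'
      · obtain ⟨k, hk⟩ := hf2 b h; exact ⟨k, fun _ => hk⟩
      · exact ⟨φ₀ b, fun h' => absurd h' h⟩
    obtain ⟨ka, hka⟩ := hA
    obtain ⟨kb, hkb⟩ := hB
    -- choose a fresh color k
    have hex : ∃ k : Fin c, k ∉ ({φ₀ a, φ₀ b, ka, kb} : Finset (Fin c)) := by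
      by_contra h
      push_neg at h
      have hsub' : (Finset.univ : Finset (Fin c)) ⊆ {φ₀ a, φ₀ b, ka, kb} :=
        fun k _ => h k
      have hcard := Finset.card_le_card hsub'
      have t1 := Finset.card_insert_le (φ₀ a) ({φ₀ b, ka, kb} : Finset (Fin c))
      have t2 := Finset.card_insert_le (φ₀ b) ({ka, kb} : Finset (Fin c))
      have t3 := Finset.card_insert_le ka ({kb} : Finset (Fin c))
      simp [Finset.card_univ] at hcard t1 t2 t3
      omega
    obtain ⟨k, hkmem⟩ := hex
    simp only [Finset.mem_insert, Finset.mem_singleton] at hkmem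
    push_neg at hkmem
    obtain ⟨hk1, hk2, hk3, hk4⟩ := hkmem
    refine ⟨fun e' => if e' = s(a, b) then k else f e', ?_, ?_⟩
    · -- properness
      intro x y hxy
      show (if s(x, y) = s(a, b) then k else f s(x, y)) ≠ φ₀ x
      rcases Finset.mem_insert.mp hxy with h | h
      · rw [if_pos h]
        rcases Sym2.eq_iff.mp h with ⟨hx, _⟩ | ⟨hx, _⟩
        · rw [hx]; exact hk1
        · rw [hx]; exact hk2
      · have hne : s(x, y) ≠ s(a, b) := fun hh => he (hh ▸ h)
        rw [if_neg hne]
        exact hf1 x y h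
    · -- odd condition
      intro v hv
      by_cases hva : v = a
      · subst hva
        by_cases h : ∃ e' ∈ s, v ∈ e'
        · refine ⟨ka, ?_⟩
          have hset : {e' : Sym2 V | e' ∈ insert s(v, b) s ∧ v ∈ e' ∧
              (if e' = s(v, b) then k else f e') = ka}
              = {e' : Sym2 V | e' ∈ s ∧ v ∈ e' ∧ f e' = ka} := by
            ext e'
            simp only [Set.mem_setOf_eq, Finset.mem_insert]
            constructor
            · rintro ⟨(rfl | hmem), hv', hcol⟩
              · rw [if_pos rfl] at hcol; exact absurd hcol hk3
              · have hne : e' ≠ s(v, b) := fun hh => he (hh ▸ hmem)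
                rw [if_neg hne] at hcol
                exact ⟨hmem, hv', hcol⟩
            · rintro ⟨hmem, hv', hcol⟩
              have hne : e' ≠ s(v, b) := fun hh => he (hh ▸ hmem)
              exact ⟨Or.inr hmem, hv', by rw [if_neg hne]; exact hcol⟩
          rw [hset]
          exact hka h
        · refine ⟨k, ?_⟩
          have hset : {e' : Sym2 V | e' ∈ insert s(v, b) s ∧ v ∈ e' ∧
              (if e' = s(v, b) then k else f e') = k} = {s(v, b)} := by
            ext e'
            simp only [Set.mem_setOf_eq, Finset.mem_insert, Set.mem_singleton_iff]
            constructor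
            · rintro ⟨(rfl | hmem), hv', _⟩
              · rfl
              · exact absurd ⟨e', hmem, hv'⟩ h
            · rintro rfl
              exact ⟨Or.inl rfl, Sym2.mem_mk_left v b, if_pos rfl⟩
          rw [hset, Set.ncard_singleton]
          exact odd_one
      · by_cases hvb : v = b
        · subst hvb
          by_cases h : ∃ e' ∈ s, v ∈ e'
          · refine ⟨kb, ?_⟩
            have hset : {e' : Sym2 V | e' ∈ insert s(a, v) s ∧ v ∈ e' ∧
                (if e' = s(a, v) then k else f e') = kb}
                = {e' : Sym2 V | e' ∈ s ∧ v ∈ e' ∧ f e' = kb} := by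
              ext e'
              simp only [Set.mem_setOf_eq, Finset.mem_insert]
              constructor
              · rintro ⟨(rfl | hmem), hv', hcol⟩
                · rw [if_pos rfl] at hcol; exact absurd hcol hk4
                · have hne : e' ≠ s(a, v) := fun hh => he (hh ▸ hmem)
                  rw [if_neg hne] at hcol
                  exact ⟨hmem, hv', hcol⟩
              · rintro ⟨hmem, hv', hcol⟩
                have hne : e' ≠ s(a, v) := fun hh => he (hh ▸ hmem)
                exact ⟨Or.inr hmem, hv', by rw [if_neg hne]; exact hcol⟩
            rw [hset]
            exact hkb h
          · refine ⟨k, ?_⟩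
            have hset : {e' : Sym2 V | e' ∈ insert s(a, v) s ∧ v ∈ e' ∧
                (if e' = s(a, v) then k else f e') = k} = {s(a, v)} := by
              ext e'
              simp only [Set.mem_setOf_eq, Finset.mem_insert, Set.mem_singleton_iff]
              constructor
              · rintro ⟨(rfl | hmem), hv', _⟩
                · rfl
                · exact absurd ⟨e', hmem, hv'⟩ h
              · rintro rfl
                exact ⟨Or.inl rfl, Sym2.mem_mk_right a v, if_pos rfl⟩
            rw [hset, Set.ncard_singleton]
            exact odd_one
        · -- v not an endpoint of the new edge
          obtain ⟨e₀, he₀, hve₀⟩ := hv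
          have he₀s : e₀ ∈ s := by
            rcases Finset.mem_insert.mp he₀ with rfl | h
            · rcases Sym2.mem_iff.mp hve₀ with h' | h'
              · exact absurd h' hva
              · exact absurd h' hvb
            · exact h
          obtain ⟨k', hk'⟩ := hf2 v ⟨e₀, he₀s, hve₀⟩
          refine ⟨k', ?_⟩
          have hset : {e' : Sym2 V | e' ∈ insert s(a, b) s ∧ v ∈ e' ∧
              (if e' = s(a, b) then k else f e') = k'}
              = {e' : Sym2 V | e' ∈ s ∧ v ∈ e' ∧ f e' = k'} := by
            ext e'
            simp only [Set.mem_setOf_eq, Finset.mem_insert]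
            constructor
            · rintro ⟨(rfl | hmem), hv', hcol⟩
              · rcases Sym2.mem_iff.mp hv' with h' | h'
                · exact absurd h' hva
                · exact absurd h' hvb
              · have hne : e' ≠ s(a, b) := fun hh => he (hh ▸ hmem)
                rw [if_neg hne] at hcol
                exact ⟨hmem, hv', hcol⟩
            · rintro ⟨hmem, hv', hcol⟩
              have hne : e' ≠ s(a, b) := fun hh => he (hh ▸ hmem)
              exact ⟨Or.inr hmem, hv', by rw [if_neg hne]; exact hcol⟩
          rw [hset]
          exact hk'

/-- If `G₀` is `c`-regular (`c ≥ 5`) and properly `c`-colorable, then the graph `G`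
obtained from `G₀` by subdividing every edge exactly once has an odd `c`-coloring. -/
theorem stmt_19 {V : Type*} [Fintype V] (G₀ : SimpleGraph V) (c : ℕ) (hc : 5 ≤ c)
    (hreg : ∀ v : V, (G₀.neighborSet v).ncard = c)
    (hcol : G₀.Colorable c) :
    HasOddColoring (Subdiv G₀) c := by
  classical
  obtain ⟨C⟩ := hcol
  set φ₀ : V → Fin c := fun v => C v with hφ₀def
  have hfin : G₀.edgeSet.Finite := Set.toFinite _
  set sF : Finset (Sym2 V) := hfin.toFinset with hsFdef
  have hmem : ∀ x : Sym2 V, x ∈ sF ↔ x ∈ G₀.edgeSet := fun x => hfin.mem_toFinset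
  have hs : ∀ a b, s(a, b) ∈ sF → φ₀ a ≠ φ₀ b := fun a b h =>
    C.valid (G₀.mem_edgeSet.mp ((hmem _).mp h))
  obtain ⟨f, hf1, hf2⟩ := aux_odd hc φ₀ sF hs
  set φ : V ⊕ G₀.edgeSet → Fin c := Sum.elim φ₀ (fun e => f e.val) with hφdef
  -- adjacency characterizations
  have hAdj1 : ∀ (v : V) (w : V ⊕ G₀.edgeSet),
      (Subdiv G₀).Adj (Sum.inl v) w ↔ ∃ e : G₀.edgeSet, w = Sum.inr e ∧ v ∈ e.val := by
    intro v w
    constructor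
    · rintro ⟨hne, h | h⟩
      · obtain ⟨v', e', hv', hw, hm⟩ := h
        rw [Sum.inl.injEq] at hv'
        exact ⟨e', hw, hv' ▸ hm⟩
      · obtain ⟨v', e', hw, hv', hm⟩ := h
        exact absurd hv' (by simp)
    · rintro ⟨e, rfl, hm⟩
      exact ⟨by simp, Or.inl ⟨v, e, rfl, rfl, hm⟩⟩
  have hAdj2 : ∀ (e : G₀.edgeSet) (w : V ⊕ G₀.edgeSet),
      (Subdiv G₀).Adj (Sum.inr e) w ↔ ∃ v : V, w = Sum.inl v ∧ v ∈ e.val := by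
    intro e w
    constructor
    · rintro ⟨hne, h | h⟩
      · obtain ⟨v', e', hv', hw, hm⟩ := h
        exact absurd hv' (by simp)
      · obtain ⟨v', e', hw, hv', hm⟩ := h
        rw [Sum.inr.injEq] at hv'
        exact ⟨v', hw, hv' ▸ hm⟩
    · rintro ⟨v, rfl, hm⟩
      exact ⟨by simp, Or.inr ⟨v, e, rfl, rfl, hm⟩⟩
  have hrep : ∀ z : Sym2 V, ∃ x y, z = s(x, y) := fun z =>
    Sym2.ind (fun x y => ⟨x, y, rfl⟩) z
  refine ⟨φ, ?_, ?_⟩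
  · -- properness
    rintro (u | eu) (w | ew) hadj
    · obtain ⟨e, heq, _⟩ := (hAdj1 u _).mp hadj
      exact absurd heq (by simp)
    · obtain ⟨e, heq, hm⟩ := (hAdj1 u _).mp hadj
      rw [Sum.inr.injEq] at heq
      subst heq
      obtain ⟨z, hz⟩ := Sym2.mem_iff_exists.mp hm
      show φ₀ u ≠ f ew.val
      rw [hz]
      exact (hf1 u z (by rw [hmem, ← hz]; exact ew.prop)).symm
    · obtain ⟨v, heq, hm⟩ := (hAdj2 eu _).mp hadj
      rw [Sum.inl.injEq] at heq
      subst heq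
      obtain ⟨z, hz⟩ := Sym2.mem_iff_exists.mp hm
      show f eu.val ≠ φ₀ w
      rw [hz]
      exact hf1 w z (by rw [hmem, ← hz]; exact eu.prop)
    · obtain ⟨v, heq, _⟩ := (hAdj2 eu _).mp hadj
      exact absurd heq (by simp)
  · -- odd condition
    rintro (v | e) hne
    · obtain ⟨w, hw⟩ := hne
      have hw' : (Subdiv G₀).Adj (Sum.inl v) w := hw
      obtain ⟨e₀, _, hm⟩ := (hAdj1 v w).mp hw'
      obtain ⟨k, hk⟩ := hf2 v ⟨e₀.val, (hmem _).mpr e₀.prop, hm⟩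
      refine ⟨k, ?_⟩
      have himg : {u | (Subdiv G₀).Adj (Sum.inl v) u ∧ φ u = k}
          = Sum.inr '' {e : G₀.edgeSet | v ∈ e.val ∧ f e.val = k} := by
        ext u
        constructor
        · rintro ⟨hadj, hcol⟩
          obtain ⟨e', rfl, hm'⟩ := (hAdj1 v u).mp hadj
          exact ⟨e', ⟨hm', by simpa [hφdef] using hcol⟩, rfl⟩
        · rintro ⟨e', ⟨hm', hcol⟩, rfl⟩
          exact ⟨(hAdj1 v _).mpr ⟨e', rfl, hm'⟩, by simpa [hφdef] using hcol⟩
      rw [himg, Set.ncard_image_of_injective _ Sum.inr_injective]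
      have himg2 : {e : Sym2 V | e ∈ sF ∧ v ∈ e ∧ f e = k}
          = Subtype.val '' {e : G₀.edgeSet | v ∈ e.val ∧ f e.val = k} := by
        ext x
        constructor
        · rintro ⟨hx1, hx2, hx3⟩
          exact ⟨⟨x, (hmem _).mp hx1⟩, ⟨hx2, hx3⟩, rfl⟩
        · rintro ⟨e', ⟨h1, h2⟩, rfl⟩
          exact ⟨(hmem _).mpr e'.prop, h1, h2⟩
      rw [himg2, Set.ncard_image_of_injective _ Subtype.val_injective] at hk
      exact hk
    · obtain ⟨a, b, hab⟩ := hrep e.val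
      have habE : s(a, b) ∈ sF := (hmem _).mpr (hab ▸ e.prop)
      have hφab : φ₀ a ≠ φ₀ b := hs a b habE
      refine ⟨φ₀ a, ?_⟩
      have hset : {u | (Subdiv G₀).Adj (Sum.inr e) u ∧ φ u = φ₀ a} = {Sum.inl a} := by
        ext u
        simp only [Set.mem_setOf_eq, Set.mem_singleton_iff]
        constructor
        · rintro ⟨hadj, hcol⟩
          obtain ⟨w, rfl, hm⟩ := (hAdj2 e u).mp hadj
          have : w = a ∨ w = b := by
            rw [hab] at hm
            exact Sym2.mem_iff.mp hm
          rcases this with rfl | rfl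
          · rfl
          · exact absurd (by simpa [hφdef] using hcol) hφab.symm
        · rintro rfl
          refine ⟨(hAdj2 e _).mpr ⟨a, rfl, ?_⟩, by simp [hφdef]⟩
          rw [hab]
          exact Sym2.mem_mk_left a b
      rw [hset, Set.ncard_singleton]
      exact odd_one
end
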